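/- arXiv:1907.08275 — 5 statements merged into one kernel-verified Lean document; each statement's English description precedes it below -/
import Mathlib

section
/- Let n ≥ 1 and let I be an n-element subset of [2n]. Then I is admissible if and only if both of the following hold: there do not exist a < b < c in [n] such that I has full pairs at {a,a'} and {c,c'} and an empty pair at {b,b'}; and there do not exist a < b < c in [n] such that I has empty pairs at {a,a'} and {c,c'} and a full pair at {b,b'}. -/
/-! The points of `I ∖ Ī` are the `x ∈ [2n]` whose pair `{x, x'}` is full in `I`, those of
`Ī ∖ I` the ones whose pair is empty. A pattern `a < b < c` of the first kind yields the
alternation `a < b < c < b'`, one of the second kind the alternation `b < c < b' < a'`.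
Conversely, without either pattern all full pairs lie on one side of all empty pairs, so the
full points and the empty points are separated by their distance to the ends of `[2n]`,
whereas four cyclically alternating points always have a full point between two empty ones
and an empty point between two full ones in the linear order. -/

open Finset

/-- Position of `x` in the cyclic order on `[m] = {1,…,m}` starting at `a`:
`a` has position `0`, `a+1` position `1`, …, `a-1` position `m-1`. -/
def cpos (m a x : ℕ) : ℕ := (x + m - a) % m

/-- The strict cyclic order `x <_a y` on `[m]`. -/
def clt (m a x y : ℕ) : Prop := cpos m a x < cpos m a y

instance (m a x y : ℕ) : Decidable (clt m a x y) :=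
  inferInstanceAs (Decidable (_ < _))

/-- `I` and `J` are weakly separated as subsets of `[m]`: there do not exist
`c ∈ [m]` and `x₁ <_c x₂ <_c x₃ <_c x₄` with `x₁, x₃ ∈ I∖J` and `x₂, x₄ ∈ J∖I`. -/
def WSep (m : ℕ) (I J : Finset ℕ) : Prop :=
  ¬ ∃ c x₁ x₂ x₃ x₄ : ℕ, c ∈ Finset.Icc 1 m ∧
      x₁ ∈ I \ J ∧ x₃ ∈ I \ J ∧ x₂ ∈ J \ I ∧ x₄ ∈ J \ I ∧
      clt m c x₁ x₂ ∧ clt m c x₂ x₃ ∧ clt m c x₃ x₄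

/-- A weakly separated collection of `k`-element subsets of `[m]`. -/
def IsWSColl (m k : ℕ) (C : Finset (Finset ℕ)) : Prop :=
  (∀ I ∈ C, I ⊆ Finset.Icc 1 m ∧ I.card = k) ∧
    ∀ I ∈ C, ∀ J ∈ C, WSep m I J

/-- `Ī := [2n] ∖ {i' : i ∈ I}` where `i' = 2n+1-i`. -/
def bar (n : ℕ) (I : Finset ℕ) : Finset ℕ :=
  Finset.Icc 1 (2 * n) \ I.image fun i => 2 * n + 1 - i

/-- A collection is symmetric if it is closed under `I ↦ Ī`. -/
def IsSym (n : ℕ) (C : Finset (Finset ℕ)) : Prop := ∀ I ∈ C, bar n I ∈ C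

/-- `I` has a full pair at `{a, a'}`. -/
def FullPair (n : ℕ) (I : Finset ℕ) (a : ℕ) : Prop := a ∈ I ∧ 2 * n + 1 - a ∈ I

/-- `I` has an empty pair at `{a, a'}`. -/
def EmptyPair (n : ℕ) (I : Finset ℕ) (a : ℕ) : Prop := a ∉ I ∧ 2 * n + 1 - a ∉ I

instance (n : ℕ) (I : Finset ℕ) (a : ℕ) : Decidable (FullPair n I a) :=
  inferInstanceAs (Decidable (_ ∈ I ∧ _ ∈ I))

instance (n : ℕ) (I : Finset ℕ) (a : ℕ) : Decidable (EmptyPair n I a) :=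
  inferInstanceAs (Decidable (_ ∉ I ∧ _ ∉ I))

/-- `I` is pair-free: it has no full pair. -/
def PairFree (n : ℕ) (I : Finset ℕ) : Prop :=
  ∀ a ∈ Finset.Icc 1 n, ¬ FullPair n I a

instance (n : ℕ) (I : Finset ℕ) : Decidable (PairFree n I) :=
  inferInstanceAs (Decidable (∀ a ∈ Finset.Icc 1 n, ¬ FullPair n I a))

/-- `I` is admissible: `I` and `Ī` are weakly separated. -/
def Admissible (n : ℕ) (I : Finset ℕ) : Prop := WSep (2 * n) I (bar n I)

/-- `I` is left-handed: admissible, has at least one full pair, and every full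
pair of `I` is above every empty pair of `I`. -/
def LeftHanded (n : ℕ) (I : Finset ℕ) : Prop :=
  Admissible n I ∧ (∃ a ∈ Finset.Icc 1 n, FullPair n I a) ∧
    ∀ a ∈ Finset.Icc 1 n, ∀ b ∈ Finset.Icc 1 n,
      FullPair n I a → EmptyPair n I b → a < b

lemma cpos_eq {m c x : ℕ} (hc : c ∈ Icc 1 m) (hx : x ∈ Icc 1 m) :
    cpos m c x = if c ≤ x then x - c else x + m - c := by
  rw [mem_Icc] at hc hx
  unfold cpos
  split_ifs with h
  · rw [show x + m - c = x - c + m by omega, Nat.add_mod_right, Nat.mod_eq_of_lt (by omega)]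
  · exact Nat.mod_eq_of_lt (by omega)

lemma clt_of_le_of_lt {m c x y : ℕ} (hc : 1 ≤ c) (hcx : c ≤ x) (hxy : x < y) (hy : y ≤ m) :
    clt m c x y := by
  unfold clt
  rw [cpos_eq (mem_Icc.2 ⟨hc, by omega⟩) (mem_Icc.2 ⟨by omega, by omega⟩),
    cpos_eq (mem_Icc.2 ⟨hc, by omega⟩) (mem_Icc.2 ⟨by omega, hy⟩), if_pos hcx, if_pos (by omega)]
  omega

/-- Four points in cyclic order are, in the linear order, a rotation of `x₁ < x₂ < x₃ < x₄`;
so each of the two alternating pairs has a member lying between the two points of the other. -/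
lemma lt_lt_or_lt_lt_of_clt {m c x₁ x₂ x₃ x₄ : ℕ} (hc : c ∈ Icc 1 m)
    (hx₁ : x₁ ∈ Icc 1 m) (hx₂ : x₂ ∈ Icc 1 m) (hx₃ : x₃ ∈ Icc 1 m) (hx₄ : x₄ ∈ Icc 1 m)
    (h₁₂ : clt m c x₁ x₂) (h₂₃ : clt m c x₂ x₃) (h₃₄ : clt m c x₃ x₄) :
    ((x₂ < x₃ ∧ x₃ < x₄) ∨ (x₄ < x₁ ∧ x₁ < x₂)) ∧
      ((x₃ < x₄ ∧ x₄ < x₁) ∨ (x₁ < x₂ ∧ x₂ < x₃)) := by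
  unfold clt at h₁₂ h₂₃ h₃₄
  simp only [cpos_eq hc hx₁, cpos_eq hc hx₂, cpos_eq hc hx₃, cpos_eq hc hx₄] at h₁₂ h₂₃ h₃₄
  rw [mem_Icc] at hc hx₁ hx₂ hx₃ hx₄
  split_ifs at h₁₂ h₂₃ h₃₄ <;> omega

lemma not_wSep_of_lt {m x₁ x₂ x₃ x₄ : ℕ} {I J : Finset ℕ} (h₀ : 1 ≤ x₁) (h₁₂ : x₁ < x₂)
    (h₂₃ : x₂ < x₃) (h₃₄ : x₃ < x₄) (h₄ : x₄ ≤ m)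
    (hx₁ : x₁ ∈ I \ J) (hx₂ : x₂ ∈ J \ I) (hx₃ : x₃ ∈ I \ J) (hx₄ : x₄ ∈ J \ I) :
    ¬ WSep m I J := fun h =>
  h ⟨x₁, x₁, x₂, x₃, x₄, mem_Icc.2 ⟨h₀, by omega⟩, hx₁, hx₃, hx₂, hx₄,
    clt_of_le_of_lt h₀ le_rfl h₁₂ (by omega), clt_of_le_of_lt h₀ h₁₂.le h₂₃ (by omega),
    clt_of_le_of_lt h₀ (by omega) h₃₄ h₄⟩

lemma forall_lt_or_forall_lt_of_not_interleaved {α : Type*} [LinearOrder α] {P Q : α → Prop}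
    (hPQ : ∀ a, P a → ¬ Q a)
    (hPQP : ¬ ∃ a b c, a < b ∧ b < c ∧ P a ∧ Q b ∧ P c)
    (hQPQ : ¬ ∃ a b c, a < b ∧ b < c ∧ Q a ∧ P b ∧ Q c) :
    (∀ a b, P a → Q b → a < b) ∨ (∀ a b, P a → Q b → b < a) := by
  by_contra! h
  obtain ⟨⟨a₁, b₁, ha₁, hb₁, hba₁⟩, ⟨a₂, b₂, ha₂, hb₂, hab₂⟩⟩ := h
  have hba₁ : b₁ < a₁ := hba₁.lt_of_ne fun h => hPQ _ ha₁ (h ▸ hb₁)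
  have hab₂ : a₂ < b₂ := hab₂.lt_of_ne fun h => hPQ _ ha₂ (h ▸ hb₂)
  rcases lt_trichotomy a₂ b₁ with h | rfl | h
  · exact hPQP ⟨a₂, b₁, a₁, h, hba₁, ha₂, hb₁, ha₁⟩
  · exact hPQ _ ha₂ hb₁
  · exact hQPQ ⟨b₁, a₂, b₂, h, hab₂, hb₁, ha₂, hb₂⟩

lemma mem_bar_iff {n x : ℕ} {I : Finset ℕ} :
    x ∈ bar n I ↔ x ∈ Icc 1 (2 * n) ∧ 2 * n + 1 - x ∉ I := by
  simp only [bar, mem_sdiff, mem_image, mem_Icc, and_congr_right_iff]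
  intro hx
  refine not_congr ⟨fun ⟨i, hi, hix⟩ => ?_, fun h => ⟨_, h, by omega⟩⟩
  rwa [show 2 * n + 1 - x = i by omega]

lemma mem_sdiff_bar_iff {n x : ℕ} {I : Finset ℕ} (hI : I ⊆ Icc 1 (2 * n)) :
    x ∈ I \ bar n I ↔ x ∈ Icc 1 (2 * n) ∧ FullPair n I x := by
  rw [mem_sdiff, mem_bar_iff, FullPair]
  exact ⟨fun ⟨hx, h⟩ => ⟨hI hx, hx, by tauto⟩, fun ⟨_, hx, hx'⟩ => ⟨hx, by tauto⟩⟩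

lemma mem_bar_sdiff_iff {n x : ℕ} {I : Finset ℕ} :
    x ∈ bar n I \ I ↔ x ∈ Icc 1 (2 * n) ∧ EmptyPair n I x := by
  rw [mem_sdiff, mem_bar_iff, EmptyPair]
  tauto

lemma fullPair_reflect {n x : ℕ} {I : Finset ℕ} (hx : x ≤ 2 * n + 1) :
    FullPair n I (2 * n + 1 - x) ↔ FullPair n I x := by
  rw [FullPair, FullPair, Nat.sub_sub_self hx, and_comm]

lemma emptyPair_reflect {n x : ℕ} {I : Finset ℕ} (hx : x ≤ 2 * n + 1) :
    EmptyPair n I (2 * n + 1 - x) ↔ EmptyPair n I x := by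
  rw [EmptyPair, EmptyPair, Nat.sub_sub_self hx, and_comm]

/-- The index `a ∈ [n]` of the pair `{a, a'}` containing `x ∈ [2n]`, i.e. the distance of `x`
to the nearer of `0` and `2n + 1`. -/
def pairIndex (n x : ℕ) : ℕ := min x (2 * n + 1 - x)

lemma pairIndex_mem_Icc {n x : ℕ} (hx : x ∈ Icc 1 (2 * n)) : pairIndex n x ∈ Icc 1 n := by
  rw [mem_Icc] at hx ⊢
  unfold pairIndex
  omega

lemma pairIndex_eq_or {n x : ℕ} : pairIndex n x = x ∨ pairIndex n x = 2 * n + 1 - x :=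
  min_choice _ _

lemma fullPair_pairIndex {n x : ℕ} {I : Finset ℕ} (hx : x ≤ 2 * n + 1) :
    FullPair n I (pairIndex n x) ↔ FullPair n I x := by
  rcases pairIndex_eq_or (n := n) (x := x) with h | h <;> rw [h]
  exact fullPair_reflect hx

lemma emptyPair_pairIndex {n x : ℕ} {I : Finset ℕ} (hx : x ≤ 2 * n + 1) :
    EmptyPair n I (pairIndex n x) ↔ EmptyPair n I x := by
  rcases pairIndex_eq_or (n := n) (x := x) with h | h <;> rw [h]
  exact emptyPair_reflect hx

lemma not_lt_lt_of_pairIndex_lt {n x y z : ℕ} (hz : z ≤ 2 * n)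
    (hyx : pairIndex n y < pairIndex n x) (hyz : pairIndex n y < pairIndex n z) :
    ¬ (x < y ∧ y < z) := by
  unfold pairIndex at hyx hyz
  omega

lemma pairIndex_lt_or_gt_of_not_interleaved {n : ℕ} {I : Finset ℕ}
    (hFEF : ¬ ∃ a b c : ℕ, a ∈ Icc 1 n ∧ b ∈ Icc 1 n ∧ c ∈ Icc 1 n ∧ a < b ∧ b < c ∧
      FullPair n I a ∧ EmptyPair n I b ∧ FullPair n I c)
    (hEFE : ¬ ∃ a b c : ℕ, a ∈ Icc 1 n ∧ b ∈ Icc 1 n ∧ c ∈ Icc 1 n ∧ a < b ∧ b < c ∧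
      EmptyPair n I a ∧ FullPair n I b ∧ EmptyPair n I c) :
    (∀ x ∈ Icc 1 (2 * n), ∀ y ∈ Icc 1 (2 * n), FullPair n I x → EmptyPair n I y →
        pairIndex n x < pairIndex n y) ∨
      (∀ x ∈ Icc 1 (2 * n), ∀ y ∈ Icc 1 (2 * n), FullPair n I x → EmptyPair n I y →
        pairIndex n y < pairIndex n x) := by
  have key := forall_lt_or_forall_lt_of_not_interleaved
    (P := fun a => a ∈ Icc 1 n ∧ FullPair n I a) (Q := fun a => a ∈ Icc 1 n ∧ EmptyPair n I a)
    (fun _ hf he => he.2.1 hf.2.1)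
    (fun ⟨a, b, c, hab, hbc, ⟨ha, hfa⟩, ⟨hb, heb⟩, ⟨hc, hfc⟩⟩ =>
      hFEF ⟨a, b, c, ha, hb, hc, hab, hbc, hfa, heb, hfc⟩)
    (fun ⟨a, b, c, hab, hbc, ⟨ha, hea⟩, ⟨hb, hfb⟩, ⟨hc, hec⟩⟩ =>
      hEFE ⟨a, b, c, ha, hb, hc, hab, hbc, hea, hfb, hec⟩)
  have hF {x} (hx : x ∈ Icc 1 (2 * n)) (h : FullPair n I x) :
      pairIndex n x ∈ Icc 1 n ∧ FullPair n I (pairIndex n x) :=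
    ⟨pairIndex_mem_Icc hx, (fullPair_pairIndex (Nat.le_succ_of_le (mem_Icc.1 hx).2)).2 h⟩
  have hE {y} (hy : y ∈ Icc 1 (2 * n)) (h : EmptyPair n I y) :
      pairIndex n y ∈ Icc 1 n ∧ EmptyPair n I (pairIndex n y) :=
    ⟨pairIndex_mem_Icc hy, (emptyPair_pairIndex (Nat.le_succ_of_le (mem_Icc.1 hy).2)).2 h⟩
  exact key.imp (fun h x hx y hy hfx hey => h _ _ (hF hx hfx) (hE hy hey))
    (fun h x hx y hy hfx hey => h _ _ (hF hx hfx) (hE hy hey))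

theorem statement6_general (n : ℕ) (I : Finset ℕ)
    (hI : I ⊆ Finset.Icc 1 (2 * n)) :
    Admissible n I ↔
      ((¬ ∃ a b c : ℕ, a ∈ Finset.Icc 1 n ∧ b ∈ Finset.Icc 1 n ∧
          c ∈ Finset.Icc 1 n ∧ a < b ∧ b < c ∧
          FullPair n I a ∧ EmptyPair n I b ∧ FullPair n I c) ∧
       (¬ ∃ a b c : ℕ, a ∈ Finset.Icc 1 n ∧ b ∈ Finset.Icc 1 n ∧
          c ∈ Finset.Icc 1 n ∧ a < b ∧ b < c ∧
          EmptyPair n I a ∧ FullPair n I b ∧ EmptyPair n I c)) := by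
  constructor
  · intro hadm
    refine ⟨fun ⟨a, b, c, ha, hb, hc, hab, hbc, hfa, heb, hfc⟩ => ?_,
      fun ⟨a, b, c, ha, hb, hc, hab, hbc, hea, hfb, hec⟩ => ?_⟩ <;> rw [mem_Icc] at ha hb hc
    · refine not_wSep_of_lt (m := 2 * n) (x₄ := 2 * n + 1 - b) ha.1 hab hbc (by omega) (by omega)
        ((mem_sdiff_bar_iff hI).2 ⟨?_, hfa⟩) (mem_bar_sdiff_iff.2 ⟨?_, heb⟩)
        ((mem_sdiff_bar_iff hI).2 ⟨?_, hfc⟩)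
        (mem_bar_sdiff_iff.2 ⟨?_, (emptyPair_reflect (by omega)).2 heb⟩) hadm <;>
        exact mem_Icc.2 ⟨by omega, by omega⟩
    · refine not_wSep_of_lt (m := 2 * n) (x₃ := 2 * n + 1 - b) (x₄ := 2 * n + 1 - a) hb.1 hbc
        (by omega) (by omega) (by omega)
        ((mem_sdiff_bar_iff hI).2 ⟨?_, hfb⟩) (mem_bar_sdiff_iff.2 ⟨?_, hec⟩)
        ((mem_sdiff_bar_iff hI).2 ⟨?_, (fullPair_reflect (by omega)).2 hfb⟩)
        (mem_bar_sdiff_iff.2 ⟨?_, (emptyPair_reflect (by omega)).2 hea⟩) hadm <;>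
        exact mem_Icc.2 ⟨by omega, by omega⟩
  · rintro ⟨hFEF, hEFE⟩ ⟨c, x₁, x₂, x₃, x₄, hc, h₁, h₃, h₂, h₄, h₁₂, h₂₃, h₃₄⟩
    rw [mem_sdiff_bar_iff hI] at h₁ h₃
    rw [mem_bar_sdiff_iff] at h₂ h₄
    obtain ⟨hfull, hempty⟩ := lt_lt_or_lt_lt_of_clt hc h₁.1 h₂.1 h₃.1 h₄.1 h₁₂ h₂₃ h₃₄
    rcases pairIndex_lt_or_gt_of_not_interleaved hFEF hEFE with hlt | hlt
    · rcases hfull with h | h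
      · exact not_lt_lt_of_pairIndex_lt (mem_Icc.1 h₄.1).2 (hlt _ h₃.1 _ h₂.1 h₃.2 h₂.2)
          (hlt _ h₃.1 _ h₄.1 h₃.2 h₄.2) h
      · exact not_lt_lt_of_pairIndex_lt (mem_Icc.1 h₂.1).2 (hlt _ h₁.1 _ h₄.1 h₁.2 h₄.2)
          (hlt _ h₁.1 _ h₂.1 h₁.2 h₂.2) h
    · rcases hempty with h | h
      · exact not_lt_lt_of_pairIndex_lt (mem_Icc.1 h₁.1).2 (hlt _ h₃.1 _ h₄.1 h₃.2 h₄.2)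
          (hlt _ h₁.1 _ h₄.1 h₁.2 h₄.2) h
      · exact not_lt_lt_of_pairIndex_lt (mem_Icc.1 h₃.1).2 (hlt _ h₁.1 _ h₂.1 h₁.2 h₂.2)
          (hlt _ h₃.1 _ h₂.1 h₃.2 h₂.2) h

/-- `I` is admissible iff no full pair of `I` lies strictly
between two empty pairs and no empty pair lies strictly between two full
pairs. -/
theorem statement6 (n : ℕ) (hn : 1 ≤ n) (I : Finset ℕ)
    (hI : I ⊆ Finset.Icc 1 (2 * n)) (hcard : I.card = n) :
    Admissible n I ↔
      ((¬ ∃ a b c : ℕ, a ∈ Finset.Icc 1 n ∧ b ∈ Finset.Icc 1 n ∧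
          c ∈ Finset.Icc 1 n ∧ a < b ∧ b < c ∧
          FullPair n I a ∧ EmptyPair n I b ∧ FullPair n I c) ∧
       (¬ ∃ a b c : ℕ, a ∈ Finset.Icc 1 n ∧ b ∈ Finset.Icc 1 n ∧
          c ∈ Finset.Icc 1 n ∧ a < b ∧ b < c ∧
          EmptyPair n I a ∧ FullPair n I b ∧ EmptyPair n I c)) :=
  statement6_general n I hI
end

section
/- Let n ≥ 1 and let I, J be n-element subsets of [2n]. Then I is weakly separated from J if and only if Ī is weakly separated from J̄. -/
open Finset

section CyclicOrder

variable {m c x y : ℕ}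

lemma cpos_eq_ite (hc : c ∈ Icc 1 m) (hx : x ∈ Icc 1 m) :
    cpos m c x = if c ≤ x then x - c else x + m - c := by
  rw [mem_Icc] at hc hx
  unfold cpos
  split_ifs with hcx
  · rw [show x + m - c = (x - c) + m by omega, Nat.add_mod_right, Nat.mod_eq_of_lt (by omega)]
  · exact Nat.mod_eq_of_lt (by omega)

lemma reflect_mem_Icc (hx : x ∈ Icc 1 m) : m + 1 - x ∈ Icc 1 m := by
  rw [mem_Icc] at hx ⊢
  omega

lemma reflect_reflect (hx : x ∈ Icc 1 m) : m + 1 - (m + 1 - x) = x := by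
  rw [mem_Icc] at hx
  omega

lemma reflectBase_mem (hm : 1 ≤ m) : (m + 1 - c) % m + 1 ∈ Icc 1 m := by
  have := Nat.mod_lt (m + 1 - c) hm
  rw [mem_Icc]
  omega

/-- The reflection `x ↦ m + 1 - x` reverses the cyclic order; the base point `c` goes to the
cyclic successor of `m + 1 - c`. -/
lemma cpos_reflect (hc : c ∈ Icc 1 m) (hx : x ∈ Icc 1 m) :
    cpos m ((m + 1 - c) % m + 1) (m + 1 - x) = m - 1 - cpos m c x := by
  have hm : 1 ≤ m := by rw [mem_Icc] at hc; omega
  have hbase : (m + 1 - c) % m + 1 = if c = 1 then 1 else m + 2 - c := by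
    rw [mem_Icc] at hc
    split_ifs with h1
    · subst h1; simp
    · rw [Nat.mod_eq_of_lt (by omega)]; omega
  rw [cpos_eq_ite (reflectBase_mem hm) (reflect_mem_Icc hx), cpos_eq_ite hc hx, hbase]
  rw [mem_Icc] at hc hx
  split_ifs <;> omega

lemma clt_reflect (hc : c ∈ Icc 1 m) (hx : x ∈ Icc 1 m) (hy : y ∈ Icc 1 m)
    (h : clt m c x y) : clt m ((m + 1 - c) % m + 1) (m + 1 - y) (m + 1 - x) := by
  unfold clt at h ⊢
  have hm : 0 < m := by rw [mem_Icc] at hc; omega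
  have := Nat.mod_lt (y + m - c) hm
  rw [cpos_reflect hc hx, cpos_reflect hc hy]
  unfold cpos at h ⊢
  omega

end CyclicOrder

section Bar

variable {n x : ℕ} {I J : Finset ℕ}

lemma mem_bar : x ∈ bar n I ↔ x ∈ Icc 1 (2 * n) ∧ 2 * n + 1 - x ∉ I := by
  simp only [bar, mem_sdiff, mem_image, mem_Icc, and_congr_right_iff]
  intro hx
  constructor
  · exact fun h hmem => h ⟨_, hmem, by omega⟩
  · rintro h ⟨i, hi, rfl⟩
    exact h (by rwa [show 2 * n + 1 - (2 * n + 1 - i) = i by omega])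

lemma bar_subset : bar n I ⊆ Icc 1 (2 * n) := sdiff_subset

lemma reflect_mem_bar_sdiff_bar (hx : x ∈ Icc 1 (2 * n)) :
    2 * n + 1 - x ∈ bar n I \ bar n J ↔ x ∈ J \ I := by
  simp only [mem_sdiff, mem_bar, reflect_reflect hx, reflect_mem_Icc hx, true_and, not_not]
  tauto

lemma bar_bar (hI : I ⊆ Icc 1 (2 * n)) : bar n (bar n I) = I := by
  ext x
  rw [mem_bar, mem_bar, not_and, not_not]
  by_cases hx : x ∈ Icc 1 (2 * n)
  · rw [reflect_reflect hx]
    exact ⟨fun h => h.2 (reflect_mem_Icc hx), fun h => ⟨hx, fun _ => h⟩⟩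
  · exact ⟨fun h => absurd h.1 hx, fun h => absurd (hI h) hx⟩

/-- The reflection `x ↦ 2n + 1 - x` maps a witness of non-separation of `I, J` to one of
`Ī, J̄`, with `I ∖ J` and `J ∖ I` exchanged and the cyclic order reversed. -/
lemma WSep.of_bar (hI : I ⊆ Icc 1 (2 * n)) (hJ : J ⊆ Icc 1 (2 * n))
    (h : WSep (2 * n) (bar n I) (bar n J)) : WSep (2 * n) I J := by
  rintro ⟨c, x₁, x₂, x₃, x₄, hc, h₁, h₃, h₂, h₄, h₁₂, h₂₃, h₃₄⟩
  have hx₁ := hI (mem_sdiff.1 h₁).1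
  have hx₃ := hI (mem_sdiff.1 h₃).1
  have hx₂ := hJ (mem_sdiff.1 h₂).1
  have hx₄ := hJ (mem_sdiff.1 h₄).1
  have hm : 1 ≤ 2 * n := by rw [mem_Icc] at hc; omega
  exact h ⟨_, _, _, _, _, reflectBase_mem hm,
    (reflect_mem_bar_sdiff_bar hx₄).2 h₄, (reflect_mem_bar_sdiff_bar hx₂).2 h₂,
    (reflect_mem_bar_sdiff_bar hx₃).2 h₃, (reflect_mem_bar_sdiff_bar hx₁).2 h₁,
    clt_reflect hc hx₃ hx₄ h₃₄, clt_reflect hc hx₂ hx₃ h₂₃, clt_reflect hc hx₁ hx₂ h₁₂⟩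

end Bar

theorem statement7_general (n : ℕ) (I J : Finset ℕ)
    (hI : I ⊆ Finset.Icc 1 (2 * n))
    (hJ : J ⊆ Finset.Icc 1 (2 * n)) :
    WSep (2 * n) I J ↔ WSep (2 * n) (bar n I) (bar n J) :=
  ⟨fun h => WSep.of_bar bar_subset bar_subset (by rwa [bar_bar hI, bar_bar hJ]),
    WSep.of_bar hI hJ⟩

/-- `I` is weakly separated from `J` iff `Ī` is weakly separated
from `J̄`. -/
theorem statement7 (n : ℕ) (hn : 1 ≤ n) (I J : Finset ℕ)
    (hI : I ⊆ Finset.Icc 1 (2 * n)) (hIcard : I.card = n)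
    (hJ : J ⊆ Finset.Icc 1 (2 * n)) (hJcard : J.card = n) :
    WSep (2 * n) I J ↔ WSep (2 * n) (bar n I) (bar n J) :=
  statement7_general n I J hI hJ
end

section
/- Let n ≥ 1 and let I, J be pair-free n-element subsets of [2n] that are weakly separated from each other. Then either I ∩ [n] ⊆ J ∩ [n] or J ∩ [n] ⊆ I ∩ [n]. -/
open Finset

lemma cpos_ge (m c x : ℕ) (h1 : c ≤ x) (h2 : x < c + m) : cpos m c x = x - c := by
  unfold cpos
  have hx : x + m - c = (x - c) + m := by omega
  rw [hx, Nat.add_mod_right]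
  exact Nat.mod_eq_of_lt (by omega)

lemma cpos_lt (m c x : ℕ) (h : x < c) (hc : c ≤ x + m) : cpos m c x = x + m - c := by
  unfold cpos
  exact Nat.mod_eq_of_lt (by omega)

lemma pair_mem (n : ℕ) (I : Finset ℕ) (hI : I ⊆ Finset.Icc 1 (2 * n))
    (hc : I.card = n) (hpf : PairFree n I) (a : ℕ) (ha1 : 1 ≤ a) (ha2 : a ≤ n) :
    a ∈ I ∨ 2 * n + 1 - a ∈ I := by
  set f : ℕ → ℕ := fun i => min i (2 * n + 1 - i) with hf
  have hinj : Set.InjOn f I := by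
    intro i hi j hj hfe
    by_contra hne
    have hbi := Finset.mem_Icc.mp (hI hi)
    have hbj := Finset.mem_Icc.mp (hI hj)
    simp only [hf] at hfe
    have hij : i + j = 2 * n + 1 := by omega
    rcases le_or_gt i n with h | h
    · exact hpf i (Finset.mem_Icc.mpr (by omega))
        ⟨hi, by rwa [show 2 * n + 1 - i = j by omega]⟩
    · exact hpf j (Finset.mem_Icc.mpr (by omega))
        ⟨hj, by rwa [show 2 * n + 1 - j = i by omega]⟩
  have hsub : I.image f ⊆ Finset.Icc 1 n := by
    intro x hx
    obtain ⟨i, hi, rfl⟩ := Finset.mem_image.mp hx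
    have := Finset.mem_Icc.mp (hI hi)
    simp only [hf, Finset.mem_Icc]
    omega
  have hcard : (I.image f).card = n := by rw [Finset.card_image_of_injOn hinj, hc]
  have heq : I.image f = Finset.Icc 1 n := by
    apply Finset.eq_of_subset_of_card_le hsub
    rw [hcard, Nat.card_Icc]; omega
  have : a ∈ I.image f := by rw [heq]; exact Finset.mem_Icc.mpr ⟨ha1, ha2⟩
  obtain ⟨i, hi, hfi⟩ := Finset.mem_image.mp this
  have := Finset.mem_Icc.mp (hI hi)
  simp only [hf] at hfi
  rcases le_or_gt i n with h | h
  · left; rwa [show a = i by omega]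
  · right; rwa [show 2 * n + 1 - a = i by omega]

/-- If `I` and `J` are pair-free `n`-element subsets of `[2n]`
which are weakly separated, then `I ∩ [n]` and `J ∩ [n]` are nested. -/
theorem statement8 (n : ℕ) (hn : 1 ≤ n) (I J : Finset ℕ)
    (hI : I ⊆ Finset.Icc 1 (2 * n)) (hIcard : I.card = n)
    (hJ : J ⊆ Finset.Icc 1 (2 * n)) (hJcard : J.card = n)
    (hIpf : PairFree n I) (hJpf : PairFree n J)
    (hws : WSep (2 * n) I J) :
    I ∩ Finset.Icc 1 n ⊆ J ∩ Finset.Icc 1 n ∨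
      J ∩ Finset.Icc 1 n ⊆ I ∩ Finset.Icc 1 n := by
  by_contra hcon
  push_neg at hcon
  obtain ⟨h1, h2⟩ := hcon
  obtain ⟨a, haI, haJ⟩ := Finset.not_subset.mp h1
  obtain ⟨b, hbJ, hbI⟩ := Finset.not_subset.mp h2
  rw [Finset.mem_inter, Finset.mem_Icc] at haI hbJ
  obtain ⟨haI, ha1, ha2⟩ := haI
  obtain ⟨hbJ, hb1, hb2⟩ := hbJ
  have haJ' : a ∉ J := fun h => haJ (Finset.mem_inter.mpr ⟨h, Finset.mem_Icc.mpr ⟨ha1, ha2⟩⟩)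
  have hbI' : b ∉ I := fun h => hbI (Finset.mem_inter.mpr ⟨h, Finset.mem_Icc.mpr ⟨hb1, hb2⟩⟩)
  have haJ2 : 2 * n + 1 - a ∈ J := by
    rcases pair_mem n J hJ hJcard hJpf a ha1 ha2 with h | h
    · exact absurd h haJ'
    · exact h
  have hbI2 : 2 * n + 1 - b ∈ I := by
    rcases pair_mem n I hI hIcard hIpf b hb1 hb2 with h | h
    · exact absurd h hbI'
    · exact h
  have haI2 : 2 * n + 1 - a ∉ I := fun h =>
    hIpf a (Finset.mem_Icc.mpr ⟨ha1, ha2⟩) ⟨haI, h⟩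
  have hbJ2 : 2 * n + 1 - b ∉ J := fun h =>
    hJpf b (Finset.mem_Icc.mpr ⟨hb1, hb2⟩) ⟨hbJ, h⟩
  have hab : a ≠ b := fun h => haJ' (h ▸ hbJ)
  rcases lt_or_gt_of_ne hab with hlt | hgt
  · exact hws ⟨1, a, b, 2 * n + 1 - b, 2 * n + 1 - a,
      Finset.mem_Icc.mpr ⟨le_refl 1, by omega⟩,
      Finset.mem_sdiff.mpr ⟨haI, haJ'⟩,
      Finset.mem_sdiff.mpr ⟨hbI2, hbJ2⟩,
      Finset.mem_sdiff.mpr ⟨hbJ, hbI'⟩,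
      Finset.mem_sdiff.mpr ⟨haJ2, haI2⟩,
      by unfold clt
         rw [cpos_ge _ _ _ (by omega) (by omega), cpos_ge _ _ _ (by omega) (by omega)]
         omega,
      by unfold clt
         rw [cpos_ge _ _ _ (by omega) (by omega), cpos_ge _ _ _ (by omega) (by omega)]
         omega,
      by unfold clt
         rw [cpos_ge _ _ _ (by omega) (by omega), cpos_ge _ _ _ (by omega) (by omega)]
         omega⟩
  · exact hws ⟨a, a, 2 * n + 1 - a, 2 * n + 1 - b, b,
      Finset.mem_Icc.mpr ⟨ha1, by omega⟩,
      Finset.mem_sdiff.mpr ⟨haI, haJ'⟩,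
      Finset.mem_sdiff.mpr ⟨hbI2, hbJ2⟩,
      Finset.mem_sdiff.mpr ⟨haJ2, haI2⟩,
      Finset.mem_sdiff.mpr ⟨hbJ, hbI'⟩,
      by unfold clt
         rw [cpos_ge _ _ _ (by omega) (by omega), cpos_ge _ _ _ (by omega) (by omega)]
         omega,
      by unfold clt
         rw [cpos_ge _ _ _ (by omega) (by omega), cpos_ge _ _ _ (by omega) (by omega)]
         omega,
      by unfold clt
         rw [cpos_ge _ _ _ (by omega) (by omega), cpos_lt _ _ _ (by omega) (by omega)]
         omega⟩
end

section
/- Let f (with white fixed point set W) be a decorated permutation of [2n] of type C, let 𝓘 = (I_1,…,I_{2n}) be its Grassmann necklace, let M be the positroid of 𝓘, and let S := {a ∈ [n] : f⁻¹(a) > n} and r := |S| + 1. If a symmetric weakly separated collection C in M contains exactly r pair-free elements, then these elements can be listed as J_1, J_2, …, J_r so that J_1 = I_1, J_r = I_{n+1}, and for each k ∈ [r−1] there is a_k ∈ S with J_{k+1} = (J_k ∖ {a_k}) ∪ {a_k'}, where a_1,…,a_{r−1} is an enumeration of S. -/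
open Finset

/-- The Gale order `I ≤_a J`: comparing the sorted lists of positions (in the
cyclic order starting at `a`) elementwise. -/
def galeLe (m a : ℕ) (I J : Finset ℕ) : Prop :=
  List.Forall₂ (· ≤ ·) ((I.image (cpos m a)).sort (· ≤ ·))
    ((J.image (cpos m a)).sort (· ≤ ·))

/-- A Grassmann necklace of type `(n, 2n)`: a sequence `I_1, …, I_{2n}` of
`n`-element subsets of `[2n]` with `I_i ∖ {i} ⊆ I_{i+1}` (indices mod `2n`). -/
def IsNecklace (n : ℕ) (ℐ : ℕ → Finset ℕ) : Prop :=
  (∀ a ∈ Finset.Icc 1 (2 * n), ℐ a ⊆ Finset.Icc 1 (2 * n) ∧ (ℐ a).card = n) ∧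
    ∀ i ∈ Finset.Icc 1 (2 * n), ℐ i \ {i} ⊆ ℐ (i % (2 * n) + 1)

/-- A Grassmann necklace is of type C if `I_{i'} = bar (I_{i+1})` (indices mod `2n`). -/
def IsTypeC (n : ℕ) (ℐ : ℕ → Finset ℕ) : Prop :=
  ∀ i ∈ Finset.Icc 1 (2 * n), ℐ (2 * n + 1 - i) = bar n (ℐ (i % (2 * n) + 1))

/-- The positroid of a Grassmann necklace: all `n`-element subsets `J` of `[2n]`
with `I_a ≤_a J` for all `a ∈ [2n]`. -/
def positroid (n : ℕ) (ℐ : ℕ → Finset ℕ) : Set (Finset ℕ) :=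
  {J | J ⊆ Finset.Icc 1 (2 * n) ∧ J.card = n ∧
    ∀ a ∈ Finset.Icc 1 (2 * n), galeLe (2 * n) a (ℐ a) J}

/-- A weakly separated collection in the positroid of the necklace `ℐ`:
`{I_1,…,I_{2n}} ⊆ C ⊆ M` and `C` is pairwise weakly separated. -/
def IsWSCollIn (n : ℕ) (ℐ : ℕ → Finset ℕ) (C : Finset (Finset ℕ)) : Prop :=
  (∀ a ∈ Finset.Icc 1 (2 * n), ℐ a ∈ C) ∧ (∀ J ∈ C, J ∈ positroid n ℐ) ∧
    ∀ I ∈ C, ∀ J ∈ C, WSep (2 * n) I J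

/-- A decorated permutation of `[2n]` of type C: a bijection `f` of `[2n]` with
`f(i') = (f(i))'`, together with a set `W` of white fixed points such that a
fixed point `i` lies in `W` iff `i'` does not. -/
def IsDecPermC (n : ℕ) (f : Equiv.Perm ℕ) (W : Finset ℕ) : Prop :=
  (∀ i ∈ Finset.Icc 1 (2 * n), f i ∈ Finset.Icc 1 (2 * n)) ∧
  (∀ i ∈ Finset.Icc 1 (2 * n), f (2 * n + 1 - i) = 2 * n + 1 - f i) ∧
  (∀ w ∈ W, w ∈ Finset.Icc 1 (2 * n) ∧ f w = w) ∧
  (∀ i ∈ Finset.Icc 1 (2 * n), f i = i → (i ∈ W ↔ 2 * n + 1 - i ∉ W))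

/-- The Grassmann necklace of a decorated permutation:
`I_a = {i ∈ [2n] : i ≠ f⁻¹(i) and i <_a f⁻¹(i)} ∪ W`. -/
def necklaceOf (n : ℕ) (f : Equiv.Perm ℕ) (W : Finset ℕ) (a : ℕ) : Finset ℕ :=
  ((Finset.Icc 1 (2 * n)).filter fun i => i ≠ f.symm i ∧ clt (2 * n) a i (f.symm i)) ∪ W

/-- `(i,j)` is an alignment of `f`: the numbers `i, f(i), f(j), j` are distinct
and appear in cyclic order. -/
def IsAlignment (n : ℕ) (f : Equiv.Perm ℕ) (i j : ℕ) : Prop :=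
  ([i, f i, f j, j] : List ℕ).Pairwise (· ≠ ·) ∧
    ∃ c ∈ Finset.Icc 1 (2 * n), clt (2 * n) c i (f i) ∧
      clt (2 * n) c (f i) (f j) ∧ clt (2 * n) c (f j) j
/-! ### Auxiliary lemmas -/

lemma cpos_one {n x : ℕ} (hx : x ∈ Finset.Icc 1 (2*n)) : cpos (2*n) 1 x = x - 1 := by
  simp only [Finset.mem_Icc] at hx
  unfold cpos
  have h : x + 2*n - 1 = (x-1) + 2*n := by omega
  rw [h, Nat.add_mod_right, Nat.mod_eq_of_lt (by omega)]

lemma clt_one {n x y : ℕ} (hx : x ∈ Finset.Icc 1 (2*n)) (hy : y ∈ Finset.Icc 1 (2*n)) :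
    clt (2*n) 1 x y ↔ x < y := by
  simp only [Finset.mem_Icc] at hx hy
  unfold clt
  rw [cpos_one (by simp only [Finset.mem_Icc]; omega),
      cpos_one (by simp only [Finset.mem_Icc]; omega)]
  omega

lemma cpos_mid {n x : ℕ} (hx : x ∈ Finset.Icc 1 (2*n)) :
    cpos (2*n) (n+1) x = if x ≤ n then x + n - 1 else x - n - 1 := by
  simp only [Finset.mem_Icc] at hx
  unfold cpos
  split
  · rw [Nat.mod_eq_of_lt (by omega)]
    omega
  · have h : x + 2*n - (n+1) = (x - n - 1) + 2*n := by omega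
    rw [h, Nat.add_mod_right, Nat.mod_eq_of_lt (by omega)]

lemma cpos_injOn {m a x y : ℕ} (ha : a ≤ m) (hx : x ∈ Finset.Icc 1 m) (hy : y ∈ Finset.Icc 1 m)
    (h : cpos m a x = cpos m a y) : x = y := by
  simp only [Finset.mem_Icc] at hx hy
  unfold cpos at h
  have h' : (x + (m-a)) % m = (y + (m-a)) % m := by
    have e1 : x + m - a = x + (m - a) := by omega
    have e2 : y + m - a = y + (m - a) := by omega
    rw [e1, e2] at h; exact h
  have h2 : x % m = y % m :=
    Nat.ModEq.add_right_cancel' (m - a) (h' : (x + (m-a)) ≡ (y + (m-a)) [MOD m])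
  have hxx : x % m = x ∨ (x = m ∧ x % m = 0) := by
    rcases Nat.lt_or_ge x m with hxm | hxm
    · exact Or.inl (Nat.mod_eq_of_lt hxm)
    · have hxe : x = m := by omega
      exact Or.inr ⟨hxe, by rw [hxe, Nat.mod_self]⟩
  have hyy : y % m = y ∨ (y = m ∧ y % m = 0) := by
    rcases Nat.lt_or_ge y m with hym | hym
    · exact Or.inl (Nat.mod_eq_of_lt hym)
    · have hye : y = m := by omega
      exact Or.inr ⟨hye, by rw [hye, Nat.mod_self]⟩
  omega

lemma forall2_sum_le : ∀ {l1 l2 : List ℕ}, List.Forall₂ (· ≤ ·) l1 l2 → l1.sum ≤ l2.sum := by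
  intro l1 l2 h
  induction h with
  | nil => simp
  | @cons a b l1 l2 hab htl ih => simp only [List.sum_cons]; omega

lemma sort_image_sum {m a : ℕ} (ha : a ≤ m) {I : Finset ℕ} (hI : I ⊆ Finset.Icc 1 m) :
    ((I.image (cpos m a)).sort (· ≤ ·)).sum = ∑ x ∈ I, cpos m a x :=
  calc ((I.image (cpos m a)).sort (· ≤ ·)).sum
      = (I.image (cpos m a)).toList.sum :=
        (Finset.sort_perm_toList (I.image (cpos m a)) (· ≤ ·)).sum_eq
    _ = ∑ x ∈ I.image (cpos m a), x := by
        rw [← List.map_id ((I.image (cpos m a)).toList)]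
        exact Finset.sum_map_toList _ id
    _ = ∑ x ∈ I, cpos m a x :=
        Finset.sum_image (fun x hx y hy hxy => cpos_injOn ha (hI hx) (hI hy) hxy)

lemma galeLe_sum {m a : ℕ} (ha : a ≤ m) {I J : Finset ℕ} (hI : I ⊆ Finset.Icc 1 m)
    (hJ : J ⊆ Finset.Icc 1 m) (h : galeLe m a I J) :
    ∑ x ∈ I, cpos m a x ≤ ∑ x ∈ J, cpos m a x := by
  have hs := forall2_sum_le h
  rwa [sort_image_sum ha hI, sort_image_sum ha hJ] at hs

/-- The set of "primed" pairs of `X`. -/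
def Pr (n : ℕ) (X : Finset ℕ) : Finset ℕ :=
  (Finset.Icc 1 n).filter (fun q => 2*n+1-q ∈ X)

lemma mem_Pr {n q : ℕ} {X : Finset ℕ} :
    q ∈ Pr n X ↔ q ∈ Finset.Icc 1 n ∧ 2*n+1-q ∈ X := Finset.mem_filter

/-- A pair-free `n`-subset of `[2n]` contains exactly one element of each pair. -/
lemma exactly_one {n : ℕ} {X : Finset ℕ} (hXs : X ⊆ Finset.Icc 1 (2*n))
    (hXc : X.card = n) (hXp : PairFree n X) :
    ∀ q ∈ Finset.Icc 1 n, (q ∈ X ↔ 2*n+1-q ∉ X) := by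
  classical
  set μ : ℕ → ℕ := fun i => if i ≤ n then i else 2*n+1-i with hμ
  have himg : X.image μ ⊆ Finset.Icc 1 n := by
    intro q hq
    rcases Finset.mem_image.mp hq with ⟨i, hi, rfl⟩
    have := Finset.mem_Icc.mp (hXs hi)
    simp only [hμ, Finset.mem_Icc]
    split <;> omega
  have hinj : Set.InjOn μ X := by
    intro i hi j hj hij
    have hi2 := Finset.mem_Icc.mp (hXs hi)
    have hj2 := Finset.mem_Icc.mp (hXs hj)
    simp only [hμ] at hij
    by_cases h1 : i ≤ n <;> by_cases h2 : j ≤ n <;> simp only [h1, h2, if_pos, if_neg,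
      if_true, if_false] at hij
    · exact hij
    · exfalso
      refine hXp i (Finset.mem_Icc.mpr ⟨by omega, by omega⟩) ⟨hi, ?_⟩
      have : 2*n+1-i = j := by omega
      rwa [this]
    · exfalso
      refine hXp j (Finset.mem_Icc.mpr ⟨by omega, by omega⟩) ⟨hj, ?_⟩
      have : 2*n+1-j = i := by omega
      rwa [this]
    · omega
  have hcard2 : (X.image μ).card = n := by
    rw [Finset.card_image_of_injOn hinj, hXc]
  have himgeq : X.image μ = Finset.Icc 1 n := by
    apply Finset.eq_of_subset_of_card_le himg
    rw [hcard2, Nat.card_Icc]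
    omega
  intro q hq
  have hq2 := Finset.mem_Icc.mp hq
  have : q ∈ X.image μ := by rw [himgeq]; exact hq
  rcases Finset.mem_image.mp this with ⟨i, hi, hiq⟩
  have hi2 := Finset.mem_Icc.mp (hXs hi)
  simp only [hμ] at hiq
  constructor
  · intro hqX hq'X
    exact hXp q hq ⟨hqX, hq'X⟩
  · intro hq'
    by_cases h1 : i ≤ n
    · rw [if_pos h1] at hiq; rwa [← hiq]
    · rw [if_neg h1] at hiq
      exfalso; apply hq'
      have : 2*n+1-q = i := by omega
      rwa [this]

/-- Sum over a pair-free set decomposes over pairs. -/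
lemma sum_pairfree {n : ℕ} {X : Finset ℕ} (hXs : X ⊆ Finset.Icc 1 (2*n))
    (hXc : X.card = n) (hXp : PairFree n X) (g : ℕ → ℕ) :
    ∑ x ∈ X, g x = ∑ q ∈ Finset.Icc 1 n, (if 2*n+1-q ∈ X then g (2*n+1-q) else g q) := by
  classical
  have hEO := exactly_one hXs hXc hXp
  refine Finset.sum_nbij' (i := fun i => if i ≤ n then i else 2*n+1-i)
    (j := fun q => if 2*n+1-q ∈ X then 2*n+1-q else q) ?_ ?_ ?_ ?_ ?_
  · intro x hx
    have := Finset.mem_Icc.mp (hXs hx)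
    simp only [Finset.mem_Icc]
    split <;> omega
  · intro q hq
    split
    · assumption
    · have := hEO q hq
      tauto
  · intro x hx
    have hx2 := Finset.mem_Icc.mp (hXs hx)
    by_cases h1 : x ≤ n
    · rw [if_pos h1]
      have hq : x ∈ Finset.Icc 1 n := Finset.mem_Icc.mpr ⟨by omega, h1⟩
      have : 2*n+1-x ∉ X := (hEO x hq).mp hx
      rw [if_neg this]
    · rw [if_neg h1]
      have he : 2*n+1-(2*n+1-x) = x := by omega
      rw [he, if_pos hx]
  · intro q hq
    have hq2 := Finset.mem_Icc.mp hq
    split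
    · have h1 : ¬ (2*n+1-q ≤ n) := by omega
      rw [if_neg h1]
      omega
    · have h1 : q ≤ n := hq2.2
      rw [if_pos h1]
  · intro x hx
    have hx2 := Finset.mem_Icc.mp (hXs hx)
    by_cases h1 : x ≤ n
    · rw [if_pos h1]
      have hq : x ∈ Finset.Icc 1 n := Finset.mem_Icc.mpr ⟨by omega, h1⟩
      have : 2*n+1-x ∉ X := (hEO x hq).mp hx
      rw [if_neg this]
    · rw [if_neg h1]
      have he : 2*n+1-(2*n+1-x) = x := by omega
      rw [he, if_pos hx]

/-- Pair-free sets are determined by their primed parts. -/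
lemma eq_of_Pr_eq {n : ℕ} {X Y : Finset ℕ}
    (hXs : X ⊆ Finset.Icc 1 (2*n)) (hXc : X.card = n) (hXp : PairFree n X)
    (hYs : Y ⊆ Finset.Icc 1 (2*n)) (hYc : Y.card = n) (hYp : PairFree n Y)
    (h : Pr n X = Pr n Y) : X = Y := by
  have hEOX := exactly_one hXs hXc hXp
  have hEOY := exactly_one hYs hYc hYp
  ext i
  by_cases hi : i ∈ Finset.Icc 1 (2*n)
  · have hi2 := Finset.mem_Icc.mp hi
    by_cases h1 : i ≤ n
    · have hq : i ∈ Finset.Icc 1 n := Finset.mem_Icc.mpr ⟨by omega, h1⟩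
      have e1 : i ∈ X ↔ i ∉ Pr n X := by
        rw [mem_Pr, hEOX i hq]; tauto
      have e2 : i ∈ Y ↔ i ∉ Pr n Y := by
        rw [mem_Pr, hEOY i hq]; tauto
      rw [e1, e2, h]
    · have hq : 2*n+1-i ∈ Finset.Icc 1 n := Finset.mem_Icc.mpr ⟨by omega, by omega⟩
      have he : 2*n+1-(2*n+1-i) = i := by omega
      have e1 : i ∈ X ↔ 2*n+1-i ∈ Pr n X := by
        rw [mem_Pr, he]; tauto
      have e2 : i ∈ Y ↔ 2*n+1-i ∈ Pr n Y := by
        rw [mem_Pr, he]; tauto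
      rw [e1, e2, h]
  · constructor
    · intro hX; exact absurd (hXs hX) hi
    · intro hY; exact absurd (hYs hY) hi

/-- The step relation: if `Pr Y = Pr X ∪ {c}` then `Y = X \ {c} ∪ {c'}`. -/
lemma step_eq {n c : ℕ} {X Y : Finset ℕ}
    (hXs : X ⊆ Finset.Icc 1 (2*n)) (hXc : X.card = n) (hXp : PairFree n X)
    (hYs : Y ⊆ Finset.Icc 1 (2*n)) (hYc : Y.card = n) (hYp : PairFree n Y)
    (hc : c ∈ Finset.Icc 1 n) (h : Pr n Y = Pr n X ∪ {c}) :
    Y = (X \ {c}) ∪ {2*n+1-c} := by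
  have hEOX := exactly_one hXs hXc hXp
  have hEOY := exactly_one hYs hYc hYp
  have hc2 := Finset.mem_Icc.mp hc
  ext i
  simp only [Finset.mem_union, Finset.mem_sdiff, Finset.mem_singleton]
  by_cases hi : i ∈ Finset.Icc 1 (2*n)
  · have hi2 := Finset.mem_Icc.mp hi
    by_cases h1 : i ≤ n
    · have hq : i ∈ Finset.Icc 1 n := Finset.mem_Icc.mpr ⟨by omega, h1⟩
      have e1 : i ∈ Y ↔ i ∉ Pr n Y := by rw [mem_Pr, hEOY i hq]; tauto
      have e2 : i ∈ X ↔ i ∉ Pr n X := by rw [mem_Pr, hEOX i hq]; tauto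
      have hne : i ≠ 2*n+1-c := by omega
      rw [e1, h]
      simp only [Finset.mem_union, Finset.mem_singleton, hne, or_false]
      rw [e2]
      tauto
  -- second half
    · have hq : 2*n+1-i ∈ Finset.Icc 1 n := Finset.mem_Icc.mpr ⟨by omega, by omega⟩
      have he : 2*n+1-(2*n+1-i) = i := by omega
      have e1 : i ∈ Y ↔ 2*n+1-i ∈ Pr n Y := by rw [mem_Pr, he]; tauto
      have e2 : i ∈ X ↔ 2*n+1-i ∈ Pr n X := by rw [mem_Pr, he]; tauto
      have hic : i ≠ c := by omega
      have hip : i = 2*n+1-c ↔ 2*n+1-i = c := by omega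
      rw [e1, h]
      simp only [Finset.mem_union, Finset.mem_singleton, hip]
      rw [e2]
      tauto
  · have h2 : i ∉ X := fun hX => hi (hXs hX)
    have h3 : i ∉ Y := fun hY => hi (hYs hY)
    have h4 : i ≠ 2*n+1-c := by
      intro he
      apply hi
      rw [he]
      exact Finset.mem_Icc.mpr ⟨by omega, by omega⟩
    tauto

/-- Weak separation forces the primed parts of pair-free sets to be comparable. -/
lemma chain_lemma {n : ℕ} {X Y : Finset ℕ}
    (hXs : X ⊆ Finset.Icc 1 (2*n)) (hXc : X.card = n) (hXp : PairFree n X)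
    (hYs : Y ⊆ Finset.Icc 1 (2*n)) (hYc : Y.card = n) (hYp : PairFree n Y)
    (hXY : WSep (2*n) X Y) (hYX : WSep (2*n) Y X) :
    Pr n X ⊆ Pr n Y ∨ Pr n Y ⊆ Pr n X := by
  by_contra hcon
  push_neg at hcon
  obtain ⟨⟨a, haX, haY⟩, ⟨b, hbY, hbX⟩⟩ :
      (∃ a, a ∈ Pr n X ∧ a ∉ Pr n Y) ∧ (∃ b, b ∈ Pr n Y ∧ b ∉ Pr n X) := by
    obtain ⟨h1, h2⟩ := hcon
    constructor
    · rcases Finset.not_subset.mp h1 with ⟨a, ha, ha'⟩; exact ⟨a, ha, ha'⟩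
    · rcases Finset.not_subset.mp h2 with ⟨b, hb, hb'⟩; exact ⟨b, hb, hb'⟩
  rw [mem_Pr] at haX hbY
  obtain ⟨haI, haX'⟩ := haX
  obtain ⟨hbI, hbY'⟩ := hbY
  have ha2 := Finset.mem_Icc.mp haI
  have hb2 := Finset.mem_Icc.mp hbI
  have haY' : 2*n+1-a ∉ Y := fun h => haY (mem_Pr.mpr ⟨haI, h⟩)
  have hbX' : 2*n+1-b ∉ X := fun h => hbX (mem_Pr.mpr ⟨hbI, h⟩)
  have haXn : a ∉ X := by
    intro h
    exact hXp a haI ⟨h, haX'⟩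
  have hbYn : b ∉ Y := by
    intro h
    exact hYp b hbI ⟨h, hbY'⟩
  have haYm : a ∈ Y := by
    have := exactly_one hYs hYc hYp a haI
    tauto
  have hbXm : b ∈ X := by
    have := exactly_one hXs hXc hXp b hbI
    tauto
  have hab : a ≠ b := by
    intro h; subst h; exact haY (mem_Pr.mpr ⟨haI, hbY'⟩)
  have h1m : (1:ℕ) ∈ Finset.Icc 1 (2*n) := Finset.mem_Icc.mpr ⟨le_refl 1, by omega⟩
  have hmem : ∀ z, 1 ≤ z → z ≤ 2*n → z ∈ Finset.Icc 1 (2*n) :=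
    fun z h1 h2 => Finset.mem_Icc.mpr ⟨h1, h2⟩
  rcases Nat.lt_or_ge a b with hlt | hge
  · -- a < b : pattern a, b, 2n+1-b, 2n+1-a violates WSep Y X
    apply hYX
    refine ⟨1, a, b, 2*n+1-b, 2*n+1-a, h1m, ?_, ?_, ?_, ?_, ?_, ?_, ?_⟩
    · exact Finset.mem_sdiff.mpr ⟨haYm, haXn⟩
    · exact Finset.mem_sdiff.mpr ⟨hbY', hbX'⟩
    · exact Finset.mem_sdiff.mpr ⟨hbXm, hbYn⟩
    · exact Finset.mem_sdiff.mpr ⟨haX', haY'⟩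
    · exact (clt_one (hmem a (by omega) (by omega)) (hmem b (by omega) (by omega))).mpr hlt
    · exact (clt_one (hmem b (by omega) (by omega)) (hmem _ (by omega) (by omega))).mpr (by omega)
    · exact (clt_one (hmem _ (by omega) (by omega)) (hmem _ (by omega) (by omega))).mpr (by omega)
  · have hlt : b < a := by omega
    apply hXY
    refine ⟨1, b, a, 2*n+1-a, 2*n+1-b, h1m, ?_, ?_, ?_, ?_, ?_, ?_, ?_⟩
    · exact Finset.mem_sdiff.mpr ⟨hbXm, hbYn⟩
    · exact Finset.mem_sdiff.mpr ⟨haX', haY'⟩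
    · exact Finset.mem_sdiff.mpr ⟨haYm, haXn⟩
    · exact Finset.mem_sdiff.mpr ⟨hbY', hbX'⟩
    · exact (clt_one (hmem b (by omega) (by omega)) (hmem a (by omega) (by omega))).mpr hlt
    · exact (clt_one (hmem a (by omega) (by omega)) (hmem _ (by omega) (by omega))).mpr (by omega)
    · exact (clt_one (hmem _ (by omega) (by omega)) (hmem _ (by omega) (by omega))).mpr (by omega)

/-- Gale condition at `n+1` forbids a pair-free set strictly above `B`. -/
lemma top_bound {n : ℕ} (hn : 1 ≤ n) {X B : Finset ℕ}
    (hXs : X ⊆ Finset.Icc 1 (2*n)) (hXc : X.card = n) (hXp : PairFree n X)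
    (hBs : B ⊆ Finset.Icc 1 (2*n)) (hBc : B.card = n) (hBp : PairFree n B)
    (hg : galeLe (2*n) (n+1) B X) (hPB : Pr n B ⊆ Pr n X) :
    Pr n X ⊆ Pr n B := by
  have hsum := galeLe_sum (m := 2*n) (a := n+1) (by omega) hBs hXs hg
  rw [sum_pairfree hBs hBc hBp, sum_pairfree hXs hXc hXp] at hsum
  set g := cpos (2*n) (n+1) with hgdef
  have hgq : ∀ q ∈ Finset.Icc 1 n, g q = q + n - 1 := by
    intro q hq
    have hq2 := Finset.mem_Icc.mp hq
    rw [hgdef, cpos_mid (Finset.mem_Icc.mpr ⟨by omega, by omega⟩), if_pos hq2.2]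
  have hgq' : ∀ q ∈ Finset.Icc 1 n, g (2*n+1-q) = n - q := by
    intro q hq
    have hq2 := Finset.mem_Icc.mp hq
    rw [hgdef, cpos_mid (Finset.mem_Icc.mpr ⟨by omega, by omega⟩), if_neg (by omega)]
    omega
  have hpt : ∀ q ∈ Finset.Icc 1 n,
      (if 2*n+1-q ∈ X then g (2*n+1-q) else g q) ≤
      (if 2*n+1-q ∈ B then g (2*n+1-q) else g q) := by
    intro q hq
    have hq2 := Finset.mem_Icc.mp hq
    by_cases hB : 2*n+1-q ∈ B
    · have hX : 2*n+1-q ∈ X := (mem_Pr.mp (hPB (mem_Pr.mpr ⟨hq, hB⟩))).2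
      rw [if_pos hB, if_pos hX]
    · rw [if_neg hB, hgq q hq]
      split
      · rw [hgq' q hq]; omega
      · exact le_refl _
  have heq : ∀ q ∈ Finset.Icc 1 n,
      (if 2*n+1-q ∈ X then g (2*n+1-q) else g q) =
      (if 2*n+1-q ∈ B then g (2*n+1-q) else g q) :=
    (Finset.sum_eq_sum_iff_of_le hpt).mp (le_antisymm (Finset.sum_le_sum hpt) hsum)
  intro q hq
  rw [mem_Pr] at hq ⊢
  obtain ⟨hqI, hqX⟩ := hq
  refine ⟨hqI, ?_⟩
  by_contra hB
  have := heq q hqI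
  rw [if_pos hqX, if_neg hB, hgq q hqI, hgq' q hqI] at this
  have hq2 := Finset.mem_Icc.mp hqI
  omega

/-- Gale condition at `1` forbids a pair-free set strictly below `A`. -/
lemma bot_bound {n : ℕ} (hn : 1 ≤ n) {X A : Finset ℕ}
    (hXs : X ⊆ Finset.Icc 1 (2*n)) (hXc : X.card = n) (hXp : PairFree n X)
    (hAs : A ⊆ Finset.Icc 1 (2*n)) (hAc : A.card = n) (hAp : PairFree n A)
    (hg : galeLe (2*n) 1 A X) (hPX : Pr n X ⊆ Pr n A) :
    Pr n A ⊆ Pr n X := by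
  have hsum := galeLe_sum (m := 2*n) (a := 1) (by omega) hAs hXs hg
  rw [sum_pairfree hAs hAc hAp, sum_pairfree hXs hXc hXp] at hsum
  set g := cpos (2*n) 1 with hgdef
  have hgq : ∀ q ∈ Finset.Icc 1 n, g q = q - 1 := by
    intro q hq
    have hq2 := Finset.mem_Icc.mp hq
    rw [hgdef, cpos_one (Finset.mem_Icc.mpr ⟨by omega, by omega⟩)]
  have hgq' : ∀ q ∈ Finset.Icc 1 n, g (2*n+1-q) = 2*n-q := by
    intro q hq
    have hq2 := Finset.mem_Icc.mp hq
    rw [hgdef, cpos_one (Finset.mem_Icc.mpr ⟨by omega, by omega⟩)]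
    omega
  have hpt : ∀ q ∈ Finset.Icc 1 n,
      (if 2*n+1-q ∈ X then g (2*n+1-q) else g q) ≤
      (if 2*n+1-q ∈ A then g (2*n+1-q) else g q) := by
    intro q hq
    have hq2 := Finset.mem_Icc.mp hq
    by_cases hX : 2*n+1-q ∈ X
    · have hA : 2*n+1-q ∈ A := (mem_Pr.mp (hPX (mem_Pr.mpr ⟨hq, hX⟩))).2
      rw [if_pos hX, if_pos hA]
    · rw [if_neg hX, hgq q hq]
      split
      · rw [hgq' q hq]; omega
      · exact le_refl _
  have heq : ∀ q ∈ Finset.Icc 1 n,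
      (if 2*n+1-q ∈ X then g (2*n+1-q) else g q) =
      (if 2*n+1-q ∈ A then g (2*n+1-q) else g q) :=
    (Finset.sum_eq_sum_iff_of_le hpt).mp (le_antisymm (Finset.sum_le_sum hpt) hsum)
  intro q hq
  rw [mem_Pr] at hq ⊢
  obtain ⟨hqI, hqA⟩ := hq
  refine ⟨hqI, ?_⟩
  by_contra hX
  have := heq q hqI
  rw [if_neg hX, if_pos hqA, hgq q hqI, hgq' q hqI] at this
  have hq2 := Finset.mem_Icc.mp hqI
  omega

lemma mem_necklaceOf {n a i : ℕ} {f : Equiv.Perm ℕ} {W : Finset ℕ} :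
    i ∈ necklaceOf n f W a ↔
      (i ∈ Finset.Icc 1 (2*n) ∧ i ≠ f.symm i ∧ clt (2*n) a i (f.symm i)) ∨ i ∈ W := by
  simp [necklaceOf, Finset.mem_union, Finset.mem_filter, and_assoc]

section decperm

variable {n : ℕ} {f : Equiv.Perm ℕ} {W : Finset ℕ} (hf : IsDecPermC n f W)

include hf

lemma symm_mem : ∀ i ∈ Finset.Icc 1 (2*n), f.symm i ∈ Finset.Icc 1 (2*n) := by
  intro i hi
  have himg : (Finset.Icc 1 (2*n)).image f = Finset.Icc 1 (2*n) := by
    apply Finset.eq_of_subset_of_card_le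
    · intro j hj
      rcases Finset.mem_image.mp hj with ⟨k, hk, rfl⟩
      exact hf.1 k hk
    · rw [Finset.card_image_of_injective _ f.injective]
  have : i ∈ (Finset.Icc 1 (2*n)).image f := by rw [himg]; exact hi
  rcases Finset.mem_image.mp this with ⟨j, hj, hji⟩
  have : f.symm i = j := by rw [← hji, Equiv.symm_apply_apply]
  rwa [this]

lemma symm_pair : ∀ i ∈ Finset.Icc 1 (2*n), f.symm (2*n+1-i) = 2*n+1 - f.symm i := by
  intro i hi
  have hj : f.symm i ∈ Finset.Icc 1 (2*n) := symm_mem hf i hi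
  have := hf.2.1 (f.symm i) hj
  rw [Equiv.apply_symm_apply] at this
  rw [← this, Equiv.symm_apply_apply]

lemma W_fixed : ∀ w ∈ W, f.symm w = w := by
  intro w hw
  have := (hf.2.2.1 w hw).2
  exact (Equiv.symm_apply_eq f).mpr this.symm

lemma necklace_one_pairfree : PairFree n (necklaceOf n f W 1) := by
  intro q hq ⟨h1, h2⟩
  have hq2 := Finset.mem_Icc.mp hq
  have hqm : q ∈ Finset.Icc 1 (2*n) := Finset.mem_Icc.mpr ⟨by omega, by omega⟩
  have hq'm : 2*n+1-q ∈ Finset.Icc 1 (2*n) := Finset.mem_Icc.mpr ⟨by omega, by omega⟩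
  have hum := symm_mem hf q hqm
  have hu2 := Finset.mem_Icc.mp hum
  have hpair := symm_pair hf q hqm
  rw [mem_necklaceOf] at h1 h2
  rcases h1 with ⟨_, hne, hlt⟩ | hw
  · -- q not fixed, q < f.symm q
    rw [clt_one hqm hum] at hlt
    rcases h2 with ⟨_, hne', hlt'⟩ | hw'
    · rw [hpair] at hlt' hne'
      rw [clt_one hq'm (Finset.mem_Icc.mpr ⟨by omega, by omega⟩)] at hlt'
      omega
    · have := W_fixed hf _ hw'
      rw [hpair] at this
      omega
  · -- q ∈ W
    have hfix : f.symm q = q := W_fixed hf q hw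
    have hfq : f q = q := (hf.2.2.1 q hw).2
    have hw' : 2*n+1-q ∉ W := (hf.2.2.2 q hqm hfq).mp hw
    rcases h2 with ⟨_, hne', _⟩ | hww
    · rw [hpair, hfix] at hne'
      omega
    · exact hw' hww

lemma necklace_mid_pairfree (hn : 1 ≤ n) : PairFree n (necklaceOf n f W (n+1)) := by
  intro q hq ⟨h1, h2⟩
  have hq2 := Finset.mem_Icc.mp hq
  have hqm : q ∈ Finset.Icc 1 (2*n) := Finset.mem_Icc.mpr ⟨by omega, by omega⟩
  have hq'm : 2*n+1-q ∈ Finset.Icc 1 (2*n) := Finset.mem_Icc.mpr ⟨by omega, by omega⟩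
  have hum := symm_mem hf q hqm
  have hu2 := Finset.mem_Icc.mp hum
  have hpair := symm_pair hf q hqm
  rw [mem_necklaceOf] at h1 h2
  rcases h1 with ⟨_, hne, hlt⟩ | hw
  · unfold clt at hlt
    rw [cpos_mid hqm, cpos_mid hum] at hlt
    rw [if_pos hq2.2] at hlt
    rcases h2 with ⟨_, hne', hlt'⟩ | hw'
    · rw [hpair] at hlt' hne'
      unfold clt at hlt'
      rw [cpos_mid hq'm, cpos_mid (Finset.mem_Icc.mpr (by omega))] at hlt'
      split at hlt
      · -- f.symm q ≤ n
        rw [if_neg (by omega), if_neg (by omega)] at hlt'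
        omega
      · omega
    · have := W_fixed hf _ hw'
      rw [hpair] at this
      omega
  · have hfix : f.symm q = q := W_fixed hf q hw
    have hfq : f q = q := (hf.2.2.1 q hw).2
    have hw' : 2*n+1-q ∉ W := (hf.2.2.2 q hqm hfq).mp hw
    rcases h2 with ⟨_, hne', _⟩ | hww
    · rw [hpair, hfix] at hne'
      omega
    · exact hw' hww

end decperm

section decperm2

variable {n : ℕ} {f : Equiv.Perm ℕ} {W : Finset ℕ} (hf : IsDecPermC n f W)

include hf

lemma mem_mid_iff (hn : 1 ≤ n) :
    ∀ q ∈ Finset.Icc 1 n,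
      (2*n+1-q ∈ necklaceOf n f W (n+1) ↔
        (2*n+1-q ∈ necklaceOf n f W 1 ∨ n < f.symm q)) := by
  intro q hq
  have hq2 := Finset.mem_Icc.mp hq
  have hqm : q ∈ Finset.Icc 1 (2*n) := Finset.mem_Icc.mpr ⟨by omega, by omega⟩
  have hq'm : 2*n+1-q ∈ Finset.Icc 1 (2*n) := Finset.mem_Icc.mpr ⟨by omega, by omega⟩
  have hum := symm_mem hf q hqm
  have hu2 := Finset.mem_Icc.mp hum
  have hpair := symm_pair hf q hqm
  have hu'm : 2*n+1 - f.symm q ∈ Finset.Icc 1 (2*n) := Finset.mem_Icc.mpr ⟨by omega, by omega⟩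
  rw [mem_necklaceOf, mem_necklaceOf]
  by_cases hw : 2*n+1-q ∈ W
  · simp [hw]
  · by_cases hfix : f.symm q = q
    · -- pair is fixed
      have hsq' : f.symm (2*n+1-q) = 2*n+1-q := by rw [hpair, hfix]
      constructor
      · rintro (⟨_, hne, _⟩ | hww)
        · exact absurd hsq'.symm hne
        · exact absurd hww hw
      · rintro ((⟨_, hne, _⟩ | hww) | hlt)
        · exact absurd hsq'.symm hne
        · exact absurd hww hw
        · omega
    · -- pair is not fixed
      have hne : 2*n+1-q ≠ f.symm (2*n+1-q) := by rw [hpair]; omega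
      have hclt2 : clt (2*n) (n+1) (2*n+1-q) (f.symm (2*n+1-q)) ↔
          (n < f.symm q ∨ (f.symm q ≤ n ∧ f.symm q < q)) := by
        rw [hpair]
        unfold clt
        rw [cpos_mid hq'm, cpos_mid hu'm, if_neg (by omega)]
        constructor
        · intro h
          split at h <;> omega
        · intro h
          split <;> omega
      have hclt1 : clt (2*n) 1 (2*n+1-q) (f.symm (2*n+1-q)) ↔ f.symm q < q := by
        rw [hpair, clt_one hq'm hu'm]
        omega
      constructor
      · rintro (⟨_, _, h⟩ | hww)
        · rw [hclt2] at h
          rcases h with h | ⟨h1, h2⟩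
          · right; exact h
          · left; left; exact ⟨hq'm, hne, hclt1.mpr h2⟩
        · exact absurd hww hw
      · rintro ((⟨_, _, h⟩ | hww) | hlt)
        · rw [hclt1] at h
          refine Or.inl ⟨hq'm, hne, hclt2.mpr ?_⟩
          omega
        · exact absurd hww hw
        · exact Or.inl ⟨hq'm, hne, hclt2.mpr (Or.inl hlt)⟩

lemma Pr_mid_eq (hn : 1 ≤ n) :
    Pr n (necklaceOf n f W (n+1)) =
      Pr n (necklaceOf n f W 1) ∪ (Finset.Icc 1 n).filter (fun a => n < f.symm a) := by
  ext q
  simp only [mem_Pr, Finset.mem_union, Finset.mem_filter]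
  constructor
  · rintro ⟨hq, hB⟩
    rcases (mem_mid_iff hf hn q hq).mp hB with h | h
    · exact Or.inl ⟨hq, h⟩
    · exact Or.inr ⟨hq, h⟩
  · rintro (⟨hq, hA⟩ | ⟨hq, hS⟩)
    · exact ⟨hq, (mem_mid_iff hf hn q hq).mpr (Or.inl hA)⟩
    · exact ⟨hq, (mem_mid_iff hf hn q hq).mpr (Or.inr hS)⟩

lemma S_disj_PrA :
    ∀ q ∈ (Finset.Icc 1 n).filter (fun a => n < f.symm a),
      q ∉ Pr n (necklaceOf n f W 1) := by
  intro q hq hmem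
  obtain ⟨hqI, hu⟩ := Finset.mem_filter.mp hq
  have hq2 := Finset.mem_Icc.mp hqI
  have hqm : q ∈ Finset.Icc 1 (2*n) := Finset.mem_Icc.mpr ⟨by omega, by omega⟩
  have hq'm : 2*n+1-q ∈ Finset.Icc 1 (2*n) := Finset.mem_Icc.mpr ⟨by omega, by omega⟩
  have hum := symm_mem hf q hqm
  have hu2 := Finset.mem_Icc.mp hum
  have hpair := symm_pair hf q hqm
  obtain ⟨_, hA⟩ := mem_Pr.mp hmem
  rw [mem_necklaceOf] at hA
  rcases hA with ⟨_, hne, hlt⟩ | hw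
  · rw [hpair] at hne hlt
    rw [clt_one hq'm (Finset.mem_Icc.mpr (by omega))] at hlt
    omega
  · have := W_fixed hf _ hw
    rw [hpair] at this
    omega

end decperm2


/-- If a symmetric weakly separated collection `C` in `M`
contains exactly `r` pair-free elements, these can be listed as
`J_1, …, J_r` starting at `I_1`, ending at `I_{n+1}`, each obtained from the
previous by replacing some `a_k ∈ S` with `a_k'`, where `a_1, …, a_{r-1}`
enumerates `S`. -/
theorem statement12 (n : ℕ) (f : Equiv.Perm ℕ) (W : Finset ℕ)
    (hf : IsDecPermC n f W)
    (S : Finset ℕ) (hS : S = (Finset.Icc 1 n).filter fun a => n < f.symm a)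
    (r : ℕ) (hr : r = S.card + 1)
    (C : Finset (Finset ℕ)) (hC : IsWSCollIn n (necklaceOf n f W) C)
    (hsym : IsSym n C)
    (hcount : (C.filter fun I => PairFree n I).card = r) :
    ∃ (J : ℕ → Finset ℕ) (a : ℕ → ℕ),
      Set.InjOn J (Finset.Icc 1 r) ∧
      (Finset.Icc 1 r).image J = C.filter (fun I => PairFree n I) ∧
      J 1 = necklaceOf n f W 1 ∧
      J r = necklaceOf n f W (n + 1) ∧
      (∀ k ∈ Finset.Icc 1 (r - 1),
        a k ∈ S ∧ J (k + 1) = (J k \ {a k}) ∪ {2 * n + 1 - a k}) ∧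
      Set.InjOn a (Finset.Icc 1 (r - 1)) ∧
      (Finset.Icc 1 (r - 1)).image a = S := by
  classical
  obtain ⟨hCmem, hCpos, hCws⟩ := hC
  rcases Nat.eq_zero_or_pos n with hn0 | hn
  · -- degenerate case n = 0
    subst hn0
    have hS0 : S = ∅ := by
      rw [hS]
      have : Finset.Icc 1 0 = (∅ : Finset ℕ) := by decide
      rw [this]; rfl
    have hr1 : r = 1 := by rw [hr, hS0]; rfl
    have hW0 : W = ∅ := by
      apply Finset.eq_empty_iff_forall_notMem.mpr
      intro w hw
      have := (hf.2.2.1 w hw).1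
      exact absurd this (by simp)
    have hneck : ∀ a, necklaceOf 0 f W a = ∅ := by
      intro a
      unfold necklaceOf
      rw [hW0]
      have : Finset.Icc 1 (2*0) = (∅ : Finset ℕ) := by decide
      rw [this]
      rfl
    have hCsub : ∀ X ∈ C, X = ∅ := by
      intro X hX
      have h1 := (hCpos X hX).1
      have : Finset.Icc 1 (2*0) = (∅ : Finset ℕ) := by decide
      rw [this] at h1
      exact Finset.subset_empty.mp h1
    have hFeq : C.filter (fun I => PairFree 0 I) = {∅} := by
      have h1 : (C.filter (fun I => PairFree 0 I)).card = 1 := by rw [hcount, hr1]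
      obtain ⟨X, hX⟩ := Finset.card_eq_one.mp h1
      have hXC : X ∈ C := (Finset.mem_filter.mp (hX ▸ Finset.mem_singleton_self X)).1
      rw [hX, hCsub X hXC]
    refine ⟨fun _ => ∅, fun _ => 0, ?_, ?_, ?_, ?_, ?_, ?_, ?_⟩
    · intro x hx y hy _
      rw [hr1] at hx hy
      rw [Finset.coe_Icc, Set.mem_Icc] at hx hy
      omega
    · rw [hFeq, hr1]
      ext X
      simp
    · exact (hneck 1).symm
    · exact (hneck (0+1)).symm
    · intro k hk
      rw [hr1] at hk
      exact absurd hk (by simp)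
    · intro x hx y hy _
      rw [hr1] at hx hy
      rw [Finset.coe_Icc, Set.mem_Icc] at hx hy
      omega
    · rw [hr1, hS0]
      simp
  · -- main case n ≥ 1
    have h1m : (1:ℕ) ∈ Finset.Icc 1 (2*n) := Finset.mem_Icc.mpr ⟨le_refl 1, by omega⟩
    have hn1m : (n+1) ∈ Finset.Icc 1 (2*n) := Finset.mem_Icc.mpr ⟨by omega, by omega⟩
    set A := necklaceOf n f W 1 with hAdef
    set B := necklaceOf n f W (n+1) with hBdef
    have hAC : A ∈ C := hCmem 1 h1m
    have hBC : B ∈ C := hCmem (n+1) hn1m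
    set F := C.filter (fun I => PairFree n I) with hFdef
    have hXs : ∀ X ∈ C, X ⊆ Finset.Icc 1 (2*n) := fun X hX => (hCpos X hX).1
    have hXc : ∀ X ∈ C, X.card = n := fun X hX => (hCpos X hX).2.1
    have hAp : PairFree n A := necklace_one_pairfree hf
    have hBp : PairFree n B := necklace_mid_pairfree hf hn
    have hAF : A ∈ F := Finset.mem_filter.mpr ⟨hAC, hAp⟩
    have hBF : B ∈ F := Finset.mem_filter.mpr ⟨hBC, hBp⟩
    have hFC : ∀ X ∈ F, X ∈ C := fun X hX => (Finset.mem_filter.mp hX).1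
    have hFp : ∀ X ∈ F, PairFree n X := fun X hX => (Finset.mem_filter.mp hX).2
    have hPrB : Pr n B = Pr n A ∪ S := by rw [hS]; exact Pr_mid_eq hf hn
    have hdisj : ∀ q ∈ S, q ∉ Pr n A := by rw [hS]; exact S_disj_PrA hf
    -- comparability of primed parts
    have hcomp : ∀ X ∈ F, ∀ Y ∈ F, Pr n X ⊆ Pr n Y ∨ Pr n Y ⊆ Pr n X := by
      intro X hX Y hY
      exact chain_lemma (hXs X (hFC X hX)) (hXc X (hFC X hX)) (hFp X hX)
        (hXs Y (hFC Y hY)) (hXc Y (hFC Y hY)) (hFp Y hY)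
        (hCws X (hFC X hX) Y (hFC Y hY)) (hCws Y (hFC Y hY) X (hFC X hX))
    -- the key sandwich
    have hkey : ∀ X ∈ F, Pr n A ⊆ Pr n X ∧ Pr n X ⊆ Pr n A ∪ S := by
      intro X hX
      constructor
      · rcases hcomp A hAF X hX with h | h
        · exact h
        · exact bot_bound hn (hXs X (hFC X hX)) (hXc X (hFC X hX)) (hFp X hX)
            (hXs A hAC) (hXc A hAC) hAp ((hCpos X (hFC X hX)).2.2 1 h1m) h
      · rcases hcomp X hX B hBF with h | h
        · rw [hPrB] at h; exact h
        · have := top_bound hn (hXs X (hFC X hX)) (hXc X (hFC X hX)) (hFp X hX)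
            (hXs B hBC) (hXc B hBC) hBp ((hCpos X (hFC X hX)).2.2 (n+1) hn1m) h
          rw [hPrB] at this; exact this
    have hTsub : ∀ X ∈ F, Pr n X \ Pr n A ⊆ S := by
      intro X hX q hq
      obtain ⟨hq1, hq2⟩ := Finset.mem_sdiff.mp hq
      rcases Finset.mem_union.mp ((hkey X hX).2 hq1) with h | h
      · exact absurd h hq2
      · exact h
    have hTeq : ∀ X ∈ F, Pr n A ∪ (Pr n X \ Pr n A) = Pr n X := by
      intro X hX
      exact Finset.union_sdiff_of_subset (hkey X hX).1
    have hPrinj : ∀ X ∈ F, ∀ Y ∈ F, Pr n X = Pr n Y → X = Y := by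
      intro X hX Y hY h
      exact eq_of_Pr_eq (hXs X (hFC X hX)) (hXc X (hFC X hX)) (hFp X hX)
        (hXs Y (hFC Y hY)) (hXc Y (hFC Y hY)) (hFp Y hY) h
    have hTinj : ∀ X ∈ F, ∀ Y ∈ F, Pr n X \ Pr n A = Pr n Y \ Pr n A → X = Y := by
      intro X hX Y hY h
      apply hPrinj X hX Y hY
      rw [← hTeq X hX, ← hTeq Y hY, h]
    have hTcomp : ∀ X ∈ F, ∀ Y ∈ F,
        Pr n X \ Pr n A ⊆ Pr n Y \ Pr n A ∨ Pr n Y \ Pr n A ⊆ Pr n X \ Pr n A := by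
      intro X hX Y hY
      rcases hcomp X hX Y hY with h | h
      · exact Or.inl (Finset.sdiff_subset_sdiff h (Finset.Subset.refl _))
      · exact Or.inr (Finset.sdiff_subset_sdiff h (Finset.Subset.refl _))
    have hTB : Pr n B \ Pr n A = S := by
      rw [hPrB]
      ext q
      simp only [Finset.mem_sdiff, Finset.mem_union]
      constructor
      · rintro ⟨h1 | h1, h2⟩
        · exact absurd h1 h2
        · exact h1
      · intro h
        exact ⟨Or.inr h, hdisj q h⟩
    have hcardinj : ∀ X ∈ F, ∀ Y ∈ F,
        (Pr n X \ Pr n A).card = (Pr n Y \ Pr n A).card → X = Y := by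
      intro X hX Y hY h
      rcases hTcomp X hX Y hY with hsub | hsub
      · exact hTinj X hX Y hY (Finset.eq_of_subset_of_card_le hsub (by omega))
      · exact (hTinj Y hY X hX (Finset.eq_of_subset_of_card_le hsub (by omega))).symm
    -- the cardinalities of the T's exhaust 0..S.card
    have hFcard : F.card = r := hcount
    have himg : F.image (fun X => (Pr n X \ Pr n A).card) = Finset.Icc 0 S.card := by
      apply Finset.eq_of_subset_of_card_le
      · intro k hk
        rcases Finset.mem_image.mp hk with ⟨X, hX, rfl⟩
        exact Finset.mem_Icc.mpr ⟨Nat.zero_le _, Finset.card_le_card (hTsub X hX)⟩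
      · rw [Finset.card_image_of_injOn (fun X hX Y hY h => hcardinj X hX Y hY h),
          hFcard, Nat.card_Icc, hr]
        omega
    have hsurj : ∀ k, k ≤ S.card → ∃ X ∈ F, (Pr n X \ Pr n A).card = k := by
      intro k hk
      have : k ∈ F.image (fun X => (Pr n X \ Pr n A).card) := by
        rw [himg]; exact Finset.mem_Icc.mpr ⟨Nat.zero_le _, hk⟩
      rcases Finset.mem_image.mp this with ⟨X, hX, h⟩
      exact ⟨X, hX, h⟩
    -- define the chain
    let g : ℕ → Finset ℕ := fun k =>
      if h : ∃ X, X ∈ F ∧ (Pr n X \ Pr n A).card + 1 = k then h.choose else ∅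
    have hg : ∀ k, 1 ≤ k → k ≤ r → g k ∈ F ∧ (Pr n (g k) \ Pr n A).card = k - 1 := by
      intro k hk1 hk2
      have hex : ∃ X, X ∈ F ∧ (Pr n X \ Pr n A).card + 1 = k := by
        obtain ⟨X, hXF, hXcd⟩ := hsurj (k-1) (by omega)
        exact ⟨X, hXF, by omega⟩
      have : g k = hex.choose := by
        show dite _ _ _ = _
        rw [dif_pos hex]
      rw [this]
      obtain ⟨h1, h2⟩ := hex.choose_spec
      exact ⟨h1, by omega⟩
    have hmono : ∀ k l, 1 ≤ k → l ≤ r → k ≤ l →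
        Pr n (g k) \ Pr n A ⊆ Pr n (g l) \ Pr n A := by
      intro k l hk1 hl2 hkl
      obtain ⟨hgkF, hgkc⟩ := hg k hk1 (by omega)
      obtain ⟨hglF, hglc⟩ := hg l (by omega) hl2
      rcases hTcomp (g k) hgkF (g l) hglF with h | h
      · exact h
      · have := Finset.eq_of_subset_of_card_le h (by omega)
        rw [this]
    -- the exchanged elements
    let aa : ℕ → ℕ := fun k => ((Pr n (g (k+1)) \ Pr n A) \ (Pr n (g k) \ Pr n A)).sum id
    have hstep : ∀ k, 1 ≤ k → k ≤ r - 1 →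
        aa k ∈ S ∧ aa k ∈ Pr n (g (k+1)) \ Pr n A ∧ aa k ∉ Pr n (g k) \ Pr n A ∧
          g (k+1) = (g k \ {aa k}) ∪ {2*n+1 - aa k} := by
      intro k hk1 hk2
      obtain ⟨hgkF, hgkc⟩ := hg k hk1 (by omega)
      obtain ⟨hgk1F, hgk1c⟩ := hg (k+1) (by omega) (by omega)
      have hsub := hmono k (k+1) hk1 (by omega) (by omega)
      have hc1 : ((Pr n (g (k+1)) \ Pr n A) \ (Pr n (g k) \ Pr n A)).card = 1 := by
        rw [Finset.card_sdiff_of_subset hsub, hgkc, hgk1c]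
        omega
      obtain ⟨x, hx⟩ := Finset.card_eq_one.mp hc1
      have hax : aa k = x := by
        show ((Pr n (g (k+1)) \ Pr n A) \ (Pr n (g k) \ Pr n A)).sum id = x
        rw [hx, Finset.sum_singleton]
        rfl
      have hxmem : x ∈ (Pr n (g (k+1)) \ Pr n A) \ (Pr n (g k) \ Pr n A) := by
        rw [hx]; exact Finset.mem_singleton_self x
      obtain ⟨hxT, hxnT⟩ := Finset.mem_sdiff.mp hxmem
      have hxS : x ∈ S := hTsub (g (k+1)) hgk1F hxT
      have hxI : x ∈ Finset.Icc 1 n := by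
        rw [hS] at hxS
        exact (Finset.mem_filter.mp hxS).1
      have hunion : Pr n (g (k+1)) = Pr n (g k) ∪ {x} := by
        have h1 : (Pr n (g k) \ Pr n A) ∪ {x} = Pr n (g (k+1)) \ Pr n A := by
          rw [← hx]
          exact Finset.union_sdiff_of_subset hsub
        rw [← hTeq (g (k+1)) hgk1F, ← h1, ← Finset.union_assoc, hTeq (g k) hgkF]
      rw [hax]
      refine ⟨hxS, hxT, hxnT, ?_⟩
      exact step_eq (hXs (g k) (hFC _ hgkF)) (hXc (g k) (hFC _ hgkF)) (hFp _ hgkF)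
        (hXs (g (k+1)) (hFC _ hgk1F)) (hXc (g (k+1)) (hFC _ hgk1F)) (hFp _ hgk1F)
        hxI hunion
    refine ⟨g, aa, ?_, ?_, ?_, ?_, ?_, ?_, ?_⟩
    · -- injectivity of g
      intro k hk l hl he
      rw [Finset.coe_Icc, Set.mem_Icc] at hk hl
      obtain ⟨_, h2⟩ := hg k hk.1 hk.2
      obtain ⟨_, h4⟩ := hg l hl.1 hl.2
      rw [he] at h2
      omega
    · -- image is the pair-free part
      ext X
      constructor
      · intro hX
        rcases Finset.mem_image.mp hX with ⟨k, hk, rfl⟩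
        rw [Finset.mem_Icc] at hk
        exact (hg k hk.1 hk.2).1
      · intro hX
        have hcd : (Pr n X \ Pr n A).card ≤ S.card := Finset.card_le_card (hTsub X hX)
        set k := (Pr n X \ Pr n A).card + 1 with hkdef
        obtain ⟨h1, h2⟩ := hg k (by omega) (by omega)
        have : g k = X := hcardinj (g k) h1 X hX (by omega)
        exact Finset.mem_image.mpr ⟨k, Finset.mem_Icc.mpr ⟨by omega, by omega⟩, this⟩
    · -- starts at A
      obtain ⟨h1, h2⟩ := hg 1 (le_refl 1) (by omega)
      have : Pr n (g 1) \ Pr n A = Pr n A \ Pr n A := by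
        rw [Finset.sdiff_self]
        exact Finset.card_eq_zero.mp (by omega)
      exact hTinj (g 1) h1 A hAF this
    · -- ends at B
      obtain ⟨h1, h2⟩ := hg r (by omega) (le_refl r)
      have hTgr : Pr n (g r) \ Pr n A = S := by
        apply Finset.eq_of_subset_of_card_le (hTsub (g r) h1)
        omega
      exact hTinj (g r) h1 B hBF (by rw [hTgr, hTB])
    · -- the steps
      intro k hk
      rw [Finset.mem_Icc] at hk
      obtain ⟨h1, _, _, h4⟩ := hstep k hk.1 hk.2
      exact ⟨h1, h4⟩
    · -- injectivity of aa
      have key : ∀ k l, 1 ≤ k → l ≤ r - 1 → k < l → aa k ≠ aa l := by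
        intro k l hk1 hl2 hkl he
        obtain ⟨_, hkT, _, _⟩ := hstep k hk1 (by omega)
        obtain ⟨_, _, hlnT, _⟩ := hstep l (by omega) hl2
        have : aa k ∈ Pr n (g l) \ Pr n A :=
          hmono (k+1) l (by omega) (by omega) (by omega) (by exact hkT)
        rw [he] at this
        exact hlnT this
      intro k hk l hl he
      rw [Finset.coe_Icc, Set.mem_Icc] at hk hl
      by_contra hne
      rcases Nat.lt_or_ge k l with h | h
      · exact key k l hk.1 hl.2 h he
      · have : l < k := by omega
        exact key l k hl.1 hk.2 this he.symm
    · -- image of aa is S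
      apply Finset.eq_of_subset_of_card_le
      · intro x hx
        rcases Finset.mem_image.mp hx with ⟨k, hk, rfl⟩
        rw [Finset.mem_Icc] at hk
        exact (hstep k hk.1 hk.2).1
      · have hinj : Set.InjOn aa ↑(Finset.Icc 1 (r-1)) := by
          have key : ∀ k l, 1 ≤ k → l ≤ r - 1 → k < l → aa k ≠ aa l := by
            intro k l hk1 hl2 hkl he
            obtain ⟨_, hkT, _, _⟩ := hstep k hk1 (by omega)
            obtain ⟨_, _, hlnT, _⟩ := hstep l (by omega) hl2
            have : aa k ∈ Pr n (g l) \ Pr n A :=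
              hmono (k+1) l (by omega) (by omega) (by omega) (by exact hkT)
            rw [he] at this
            exact hlnT this
          intro k hk l hl he
          rw [Finset.coe_Icc, Set.mem_Icc] at hk hl
          by_contra hne
          rcases Nat.lt_or_ge k l with h | h
          · exact key k l hk.1 hl.2 h he
          · have : l < k := by omega
            exact key l k hl.1 hk.2 this he.symm
        rw [Finset.card_image_of_injOn hinj, Nat.card_Icc]
        omega
end

section
/- Let 𝓘 = (I_1,…,I_{2n}) be a Grassmann necklace of type (n,2n) that is of type C. Then I_1 and I_{n+1} are pair-free. -/
open Finset

/-! The type C condition at `i = 2n` and `i = n`, the two indices with `i' = i + 1 (mod 2n)`,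
says that `I_1` and `I_{n+1}` are self-dual: `Ī = I`. A self-dual set is pair-free, since
`a ∈ Ī` means exactly that `a' ∉ I`. -/

theorem pairFree_of_eq_bar {n : ℕ} {I : Finset ℕ} (hI : I = bar n I) : PairFree n I := by
  rintro a ha ⟨haI, ha'I⟩
  have haBar : a ∈ bar n I := hI ▸ haI
  simp only [bar, mem_sdiff, mem_image, not_exists, not_and] at haBar
  exact haBar.2 (2 * n + 1 - a) ha'I (by simp only [mem_Icc] at ha; omega)

namespace IsTypeC

variable {n : ℕ} {ℐ : ℕ → Finset ℕ}

theorem eq_bar_one (hTC : IsTypeC n ℐ) (hn : 0 < n) : ℐ 1 = bar n (ℐ 1) := by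
  have h := hTC (2 * n) (by simp only [mem_Icc]; omega)
  rwa [Nat.mod_self, show 2 * n + 1 - 2 * n = 1 by omega] at h

theorem eq_bar_succ (hTC : IsTypeC n ℐ) (hn : 0 < n) : ℐ (n + 1) = bar n (ℐ (n + 1)) := by
  have h := hTC n (by simp only [mem_Icc]; omega)
  rwa [Nat.mod_eq_of_lt (by omega), show 2 * n + 1 - n = n + 1 by omega] at h

end IsTypeC

theorem statement13_general (n : ℕ) (ℐ : ℕ → Finset ℕ)
    (hTC : IsTypeC n ℐ) :
    PairFree n (ℐ 1) ∧ PairFree n (ℐ (n + 1)) := by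
  rcases Nat.eq_zero_or_pos n with rfl | hn
  · exact ⟨fun a ha => by simp at ha, fun a ha => by simp at ha⟩
  exact ⟨pairFree_of_eq_bar (hTC.eq_bar_one hn), pairFree_of_eq_bar (hTC.eq_bar_succ hn)⟩

/-- For a Grassmann necklace of type `(n,2n)` of type C, the
terms `I_1` and `I_{n+1}` are pair-free. -/
theorem statement13 (n : ℕ) (ℐ : ℕ → Finset ℕ)
    (hN : IsNecklace n ℐ) (hTC : IsTypeC n ℐ) :
    PairFree n (ℐ 1) ∧ PairFree n (ℐ (n + 1)) :=
  statement13_general n ℐ hTC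
end
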